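/- arXiv:2405.11766 — 5 statements merged into one kernel-verified Lean document; each statement's English description precedes it below -/
import Mathlib

section
/- The Shapley–Shubik feature importance score instantiated with the WAXp characteristic function respects strong duality: for every feature i, the score computed over sets S ∋ i with i critical with respect to WAXps, with coefficient 1/(|F|·C(|F|−1,|S|−1)), equals the dual score computed over sets S ∋ i with i critical with respect to WCXps, with the same coefficient. -/
open Finset

/-- `S` is a weak abductive explanation (WAXp). -/
def WAXp {m : ℕ} {K : Type*} {D : Fin m → Type*} (κ : (∀ i, D i) → K) (v : ∀ i, D i)
    (S : Finset (Fin m)) : Prop :=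
  ∀ x : ∀ i, D i, (∀ i ∈ S, x i = v i) → κ x = κ v

/-- `S` is a weak contrastive explanation (WCXp). -/
def WCXp {m : ℕ} {K : Type*} {D : Fin m → Type*} (κ : (∀ i, D i) → K) (v : ∀ i, D i)
    (S : Finset (Fin m)) : Prop :=
  ∃ x : ∀ i, D i, (∀ i ∉ S, x i = v i) ∧ κ x ≠ κ v

/-- Feature `i` is critical for `S` with respect to WAXps. -/
def Crit {m : ℕ} {K : Type*} {D : Fin m → Type*} (κ : (∀ i, D i) → K) (v : ∀ i, D i)
    (i : Fin m) (S : Finset (Fin m)) : Prop :=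
  WAXp κ v S ∧ ¬ WAXp κ v (S.erase i)

/-- Feature `i` is critical for `S` with respect to WCXps. -/
def CritD {m : ℕ} {K : Type*} {D : Fin m → Type*} (κ : (∀ i, D i) → K) (v : ∀ i, D i)
    (i : Fin m) (S : Finset (Fin m)) : Prop :=
  WCXp κ v S ∧ ¬ WCXp κ v (S.erase i)

/-- The Shapley coefficient `ς(k) = 1/(m·C(m−1,k−1))`. -/
def shapCoeff (m k : ℕ) : ℚ :=
  1 / ((m : ℚ) * ((m - 1).choose (k - 1) : ℚ))

open Classical in
/-- Shapley–Shubik FIS instantiated with the WAXp characteristic function. -/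
noncomputable def ScS {m : ℕ} {K : Type*} {D : Fin m → Type*} (κ : (∀ i, D i) → K)
    (v : ∀ i, D i) (i : Fin m) : ℚ :=
  ∑ S ∈ univ.powerset.filter (fun S => i ∈ S ∧ Crit κ v i S), shapCoeff m S.card

open Classical in
/-- The dual Shapley–Shubik FIS, using criticality with respect to WCXps. -/
noncomputable def ScSD {m : ℕ} {K : Type*} {D : Fin m → Type*} (κ : (∀ i, D i) → K)
    (v : ∀ i, D i) (i : Fin m) : ℚ :=
  ∑ S ∈ univ.powerset.filter (fun S => i ∈ S ∧ CritD κ v i S), shapCoeff m S.card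

lemma wcxp_iff {m : ℕ} {K : Type*} {D : Fin m → Type*} (κ : (∀ i, D i) → K) (v : ∀ i, D i)
    (S : Finset (Fin m)) : WCXp κ v S ↔ ¬ WAXp κ v Sᶜ := by
  unfold WCXp WAXp
  push_neg
  simp [Finset.mem_compl]

theorem stmt3 {m : ℕ} {K : Type*} {D : Fin m → Type*} [∀ i, Fintype (D i)]
    (κ : (∀ i, D i) → K) (v : ∀ i, D i) (i : Fin m) :
    ScS κ v i = ScSD κ v i := by
  classical
  unfold ScS ScSD
  refine Finset.sum_bij' (fun S _ => Sᶜ ∪ {i}) (fun T _ => Tᶜ ∪ {i}) ?_ ?_ ?_ ?_ ?_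
  · intro S hS
    simp only [Finset.mem_filter, Finset.mem_powerset] at hS ⊢
    obtain ⟨-, hiS, hA, hA'⟩ := hS
    have hiT : i ∈ Sᶜ ∪ {i} := by simp
    have he : (Sᶜ ∪ {i}).erase i = Sᶜ := by
      ext j; simp only [Finset.mem_erase, Finset.mem_union, Finset.mem_singleton,
        Finset.mem_compl]
      constructor
      · rintro ⟨hj, hj' | rfl⟩ <;> tauto
      · intro hj; exact ⟨fun h => hj (h ▸ hiS), Or.inl hj⟩
    have hc : (Sᶜ ∪ {i})ᶜ = S.erase i := by
      ext j; simp only [Finset.mem_compl, Finset.mem_union, Finset.mem_singleton,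
        Finset.mem_erase]
      tauto
    refine ⟨Finset.subset_univ _, hiT, ?_, ?_⟩
    · rw [wcxp_iff, hc]; exact hA'
    · rw [he, wcxp_iff]
      simp only [compl_compl]
      exact fun h => h hA
  · intro T hT
    simp only [Finset.mem_filter, Finset.mem_powerset] at hT ⊢
    obtain ⟨-, hiT, hC, hC'⟩ := hT
    have he : (Tᶜ ∪ {i}).erase i = Tᶜ := by
      ext j; simp only [Finset.mem_erase, Finset.mem_union, Finset.mem_singleton,
        Finset.mem_compl]
      constructor
      · rintro ⟨hj, hj' | rfl⟩ <;> tauto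
      · intro hj; exact ⟨fun h => hj (h ▸ hiT), Or.inl hj⟩
    have hc : (Tᶜ ∪ {i})ᶜ = T.erase i := by
      ext j; simp only [Finset.mem_compl, Finset.mem_union, Finset.mem_singleton,
        Finset.mem_erase]
      tauto
    rw [wcxp_iff] at hC hC'
    have hc2 : (T.erase i)ᶜ = Tᶜ ∪ {i} := by
      ext j; simp only [Finset.mem_compl, Finset.mem_union, Finset.mem_singleton,
        Finset.mem_erase]
      constructor
      · intro hj
        by_cases hji : j = i
        · exact Or.inr hji
        · exact Or.inl fun h => hj ⟨hji, h⟩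
      · rintro (h | rfl) <;> tauto
    rw [hc2] at hC'
    refine ⟨Finset.subset_univ _, by simp, ?_, ?_⟩
    · exact not_not.mp hC'
    · rw [he]; exact hC
  · intro S hS
    simp only [Finset.mem_filter, Finset.mem_powerset] at hS
    have hiS := hS.2.1
    ext j
    simp only [Finset.mem_union, Finset.mem_compl, Finset.mem_singleton]
    constructor
    · rintro (h | rfl)
      · by_contra hj; exact h (Or.inl hj)
      · exact hiS
    · intro hj
      by_cases hji : j = i
      · exact Or.inr hji
      · exact Or.inl fun h => h.elim (fun h' => h' hj) hji
  · intro T hT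
    simp only [Finset.mem_filter, Finset.mem_powerset] at hT
    have hiT := hT.2.1
    ext j
    simp only [Finset.mem_union, Finset.mem_compl, Finset.mem_singleton]
    constructor
    · rintro (h | rfl)
      · by_contra hj; exact h (Or.inl hj)
      · exact hiT
    · intro hj
      by_cases hji : j = i
      · exact Or.inr hji
      · exact Or.inl fun h => h.elim (fun h' => h' hj) hji
  · intro S hS
    simp only [Finset.mem_filter, Finset.mem_powerset] at hS
    have hiS := hS.2.1
    have hnotc : i ∉ Sᶜ := by simp [hiS]
    have hcard : (Sᶜ ∪ {i}).card = m - S.card + 1 := by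
      have : Sᶜ ∪ {i} = insert i Sᶜ := by ext j; simp [or_comm]
      rw [this, Finset.card_insert_of_notMem hnotc, Finset.card_compl, Fintype.card_fin]
    have h1 : 1 ≤ S.card := Finset.card_pos.mpr ⟨i, hiS⟩
    have hm : S.card ≤ m := by
      simpa using Finset.card_le_card (Finset.subset_univ S)
    rw [hcard]
    unfold shapCoeff
    congr 2
    have : m - S.card + 1 - 1 = (m - 1) - (S.card - 1) := by omega
    rw [this, Nat.choose_symm (by omega)]
end

section
/- The Banzhaf feature importance score instantiated with the WAXp characteristic function respects strong duality: for every feature i, Σ_{S ∋ i, Crit(i,S)} 1/2^{|F|−1} equals Σ_{S ∋ i, Crit_d(i,S)} 1/2^{|F|−1}, where Crit uses WAXps and Crit_d uses WCXps. -/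
open Finset

open Classical in
/-- Banzhaf FIS instantiated with the WAXp characteristic function. -/
noncomputable def ScB {m : ℕ} {K : Type*} {D : Fin m → Type*} (κ : (∀ i, D i) → K)
    (v : ∀ i, D i) (i : Fin m) : ℚ :=
  ∑ S ∈ univ.powerset.filter (fun S => i ∈ S ∧ Crit κ v i S), (1 : ℚ) / 2 ^ (m - 1)

open Classical in
/-- The dual Banzhaf FIS, using criticality with respect to WCXps. -/
noncomputable def ScBD {m : ℕ} {K : Type*} {D : Fin m → Type*} (κ : (∀ i, D i) → K)
    (v : ∀ i, D i) (i : Fin m) : ℚ :=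
  ∑ S ∈ univ.powerset.filter (fun S => i ∈ S ∧ CritD κ v i S), (1 : ℚ) / 2 ^ (m - 1)

theorem stmt4 {m : ℕ} {K : Type*} {D : Fin m → Type*} [∀ i, Fintype (D i)]
    (κ : (∀ i, D i) → K) (v : ∀ i, D i) (i : Fin m) :
    ScB κ v i = ScBD κ v i := by
  classical
  have hWC : ∀ T : Finset (Fin m), WCXp κ v T ↔ ¬ WAXp κ v (univ \ T) := by
    intro T
    unfold WCXp WAXp
    push_neg
    constructor
    · rintro ⟨x, hx, hk⟩
      exact ⟨x, fun j hj => hx j (by simpa using hj), hk⟩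
    · rintro ⟨x, hx, hk⟩
      exact ⟨x, fun j hj => hx j (by simpa using hj), hk⟩
  have key : ∀ S : Finset (Fin m), i ∈ S →
      (Crit κ v i S ↔ CritD κ v i (insert i (univ \ S))) := by
    intro S hiS
    have h1 : univ \ insert i (univ \ S) = S.erase i := by
      ext j; by_cases hj : j = i <;> simp [hj]
    have h2 : (insert i (univ \ S)).erase i = univ \ S := by
      rw [erase_insert (by simp [hiS])]
    have h3 : univ \ (univ \ S) = S := by simp
    unfold Crit CritD
    rw [hWC, hWC, h1, h2, h3]
    tauto
  unfold ScB ScBD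
  refine Finset.sum_nbij' (fun S => insert i (univ \ S)) (fun S => insert i (univ \ S))
    ?_ ?_ ?_ ?_ ?_
  · intro S hS
    simp only [mem_filter, mem_powerset] at hS ⊢
    exact ⟨subset_univ _, mem_insert_self _ _, (key S hS.2.1).1 hS.2.2⟩
  · intro S hS
    simp only [mem_filter, mem_powerset] at hS ⊢
    refine ⟨subset_univ _, mem_insert_self _ _, ?_⟩
    have hiS : i ∈ S := hS.2.1
    have hinv : insert i (univ \ insert i (univ \ S)) = S := by
      ext j
      by_cases hj : j = i
      · simp [hj, hiS]
      · simp [hj]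
    exact (key _ (mem_insert_self _ _)).2 (by rw [hinv]; exact hS.2.2)
  · intro S hS
    simp only [mem_filter, mem_powerset] at hS
    have hiS : i ∈ S := hS.2.1
    ext j
    by_cases hj : j = i
    · simp [hj, hiS]
    · simp [hj]
  · intro S hS
    simp only [mem_filter, mem_powerset] at hS
    have hiS : i ∈ S := hS.2.1
    ext j
    by_cases hj : j = i
    · simp [hj, hiS]
    · simp [hj]
  · intros; rfl
end

section
/- Let 𝔸 = {{1,8},{2,3,4},{2,3,5},{2,3,6},{2,3,7},{2,4,5},{2,4,6},{2,4,7},{2,5,6},{2,5,7},{2,6,7}} over features F = {1,…,8}. Then the Responsibility score satisfies Sc_R(1) = Sc_R(8) = 1/2 > 1/3 = Sc_R(2). -/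
open Finset

/-- The Responsibility score of feature `i` for a family `𝔸` of subsets of
features: `max{1/|S| : S ∈ 𝔸, i ∈ S}` (and `0` if no such set exists). -/
def respScore (𝔸 : Finset (Finset ℕ)) (i : ℕ) : ℚ :=
  (((𝔸.filter (fun S => i ∈ S)).image (fun S => 1 / (S.card : ℚ))).max).getD 0

theorem stmt15 :
    let 𝔸 : Finset (Finset ℕ) :=
      {{1, 8}, {2, 3, 4}, {2, 3, 5}, {2, 3, 6}, {2, 3, 7}, {2, 4, 5}, {2, 4, 6},
        {2, 4, 7}, {2, 5, 6}, {2, 5, 7}, {2, 6, 7}}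
    respScore 𝔸 1 = 1 / 2 ∧ respScore 𝔸 8 = 1 / 2 ∧ respScore 𝔸 2 = 1 / 3 ∧
      respScore 𝔸 2 < respScore 𝔸 1 := by
  refine ⟨?_, ?_, ?_, ?_⟩ <;> simp [respScore, Finset.filter_insert, Finset.filter_singleton, Option.getD] <;> norm_num
end

section
/- For the classifier κ(x₁,x₂,x₃,x₄) = x₁ ∧ (x₂ ∨ (x₃ ∧ x₄)) with instance v = (1,1,1,1), the Holler–Packel score computed over AXps yields Sc_H(1) = 1, Sc_H(2) = 1/2, while its dual computed over CXps yields Sc_H^d(1) = 1/3, Sc_H^d(2) = 2/3; hence the Holler–Packel score does not even respect weak duality (it reverses the relative ordering of features 1 and 2). -/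
open Finset

/-- An AXp is a subset-minimal WAXp. -/
def AXp {m : ℕ} {K : Type*} {D : Fin m → Type*} (κ : (∀ i, D i) → K) (v : ∀ i, D i)
    (S : Finset (Fin m)) : Prop :=
  WAXp κ v S ∧ ∀ T ⊂ S, ¬ WAXp κ v T

/-- A CXp is a subset-minimal WCXp. -/
def CXp {m : ℕ} {K : Type*} {D : Fin m → Type*} (κ : (∀ i, D i) → K) (v : ∀ i, D i)
    (S : Finset (Fin m)) : Prop :=
  WCXp κ v S ∧ ∀ T ⊂ S, ¬ WCXp κ v T

/-- The classifier `κ(x₁,x₂,x₃,x₄) = x₁ ∧ (x₂ ∨ (x₃ ∧ x₄))` (features are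
`0`-indexed). -/
def kappa4 (x : Fin 4 → Bool) : Bool :=
  x 0 && (x 1 || (x 2 && x 3))

/-- The instance `v = (1,1,1,1)`. -/
def v4 : Fin 4 → Bool := fun _ => true

open Classical in
/-- The set of all AXps. -/
noncomputable def AXps {m : ℕ} {K : Type*} {D : Fin m → Type*} (κ : (∀ i, D i) → K)
    (v : ∀ i, D i) : Finset (Finset (Fin m)) :=
  univ.powerset.filter (AXp κ v)

open Classical in
/-- The set of all CXps. -/
noncomputable def CXps {m : ℕ} {K : Type*} {D : Fin m → Type*} (κ : (∀ i, D i) → K)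
    (v : ∀ i, D i) : Finset (Finset (Fin m)) :=
  univ.powerset.filter (CXp κ v)

open Classical in
/-- The Holler–Packel score of feature `i` for a family `𝒳` of sets of features. -/
noncomputable def hpScore {m : ℕ} (𝒳 : Finset (Finset (Fin m))) (i : Fin m) : ℚ :=
  ((𝒳.filter (fun S => i ∈ S)).card : ℚ) / (𝒳.card : ℚ)

-- auxiliary
instance decWAXp (κ : (Fin 4 → Bool) → Bool) (v : Fin 4 → Bool) : DecidablePred (WAXp κ v) := by
  unfold WAXp; infer_instance

instance decWCXp (κ : (Fin 4 → Bool) → Bool) (v : Fin 4 → Bool) : DecidablePred (WCXp κ v) := by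
  unfold WCXp; infer_instance

instance decAXp (κ : (Fin 4 → Bool) → Bool) (v : Fin 4 → Bool) : DecidablePred (AXp κ v) := by
  unfold AXp; infer_instance

instance decCXp (κ : (Fin 4 → Bool) → Bool) (v : Fin 4 → Bool) : DecidablePred (CXp κ v) := by
  unfold CXp; infer_instance

lemma AXps_eq : AXps kappa4 v4 = ({{0,1},{0,2,3}} : Finset (Finset (Fin 4))) := by
  rw [AXps, Finset.filter_congr_decidable]
  decide

lemma CXps_eq : CXps kappa4 v4 = ({{0},{1,2},{1,3}} : Finset (Finset (Fin 4))) := by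
  rw [CXps, Finset.filter_congr_decidable]
  decide

lemma hpScore_eq {m : ℕ} (𝒳 : Finset (Finset (Fin m))) (i : Fin m) [DecidablePred (fun S : Finset (Fin m) => i ∈ S)] :
    hpScore 𝒳 i = ((𝒳.filter (fun S => i ∈ S)).card : ℚ) / (𝒳.card : ℚ) := by
  rw [hpScore, Finset.filter_congr_decidable]

theorem stmt17 :
    hpScore (AXps kappa4 v4) 0 = 1 ∧ hpScore (AXps kappa4 v4) 1 = 1 / 2 ∧
      hpScore (CXps kappa4 v4) 0 = 1 / 3 ∧ hpScore (CXps kappa4 v4) 1 = 2 / 3 ∧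
      hpScore (AXps kappa4 v4) 1 < hpScore (AXps kappa4 v4) 0 ∧
      hpScore (CXps kappa4 v4) 0 < hpScore (CXps kappa4 v4) 1 := by
  have hA : (({{0,1},{0,2,3}} : Finset (Finset (Fin 4))).card) = 2 := by decide
  have hC : (({{0},{1,2},{1,3}} : Finset (Finset (Fin 4))).card) = 3 := by decide
  have hA0 : ((({{0,1},{0,2,3}} : Finset (Finset (Fin 4))).filter (fun S => (0:Fin 4) ∈ S)).card) = 2 := by decide
  have hA1 : ((({{0,1},{0,2,3}} : Finset (Finset (Fin 4))).filter (fun S => (1:Fin 4) ∈ S)).card) = 1 := by decide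
  have hC0 : ((({{0},{1,2},{1,3}} : Finset (Finset (Fin 4))).filter (fun S => (0:Fin 4) ∈ S)).card) = 1 := by decide
  have hC1 : ((({{0},{1,2},{1,3}} : Finset (Finset (Fin 4))).filter (fun S => (1:Fin 4) ∈ S)).card) = 2 := by decide
  rw [AXps_eq, CXps_eq, hpScore_eq, hpScore_eq, hpScore_eq, hpScore_eq,
    hA, hC, hA0, hA1, hC0, hC1]
  norm_num
end

section
/- For the Boolean classifier κ₁(x₁,x₂) = x₁ with instance v = (1,1), the generator-based characteristic function ν_G satisfies ν_G({1}) = ν_G({2}), yet the Holler–Packel template score assigns value 1 to feature 1 and 0 to feature 2; hence the Holler–Packel template score does not satisfy the symmetry axiom. -/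
open Finset

/-- `S` is a generator: adding any single missing feature yields a WAXp. -/
def Generator {m : ℕ} {K : Type*} {D : Fin m → Type*} (κ : (∀ i, D i) → K)
    (v : ∀ i, D i) (S : Finset (Fin m)) : Prop :=
  ∀ i ∉ S, WAXp κ v (insert i S)

open Classical in
/-- The generator-based characteristic function `ν_G`. -/
noncomputable def nuG {m : ℕ} {K : Type*} {D : Fin m → Type*} (κ : (∀ i, D i) → K)
    (v : ∀ i, D i) (S : Finset (Fin m)) : ℚ :=
  if Generator κ v S then 1 else 0

open Classical in
/-- The Holler–Packel template score with characteristic function `ν`. -/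
noncomputable def tScH {m : ℕ} {K : Type*} {D : Fin m → Type*} (κ : (∀ i, D i) → K)
    (v : ∀ i, D i) (ν : Finset (Fin m) → ℚ) (i : Fin m) : ℚ :=
  ∑ S ∈ (AXps κ v).filter (fun S => i ∈ S),
    (ν S - ν (S.erase i)) / ((AXps κ v).card : ℚ)

/-- The Boolean classifier `κ₁(x₁,x₂) = x₁` (features are `0`-indexed). -/
def kappa1 (x : Fin 2 → Bool) : Bool := x 0

/-- The instance `v = (1,1)`. -/
def v2 : Fin 2 → Bool := fun _ => true


lemma waxp_iff (S : Finset (Fin 2)) : WAXp kappa1 v2 S ↔ 0 ∈ S := by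
  constructor
  · intro h
    by_contra h0
    have := h (fun i => if i = 0 then false else true) (by
      intro i hi
      have : i ≠ 0 := fun e => h0 (e ▸ hi)
      simp [v2, this])
    simp [kappa1, v2] at this
  · intro h0 x hx
    have := hx 0 h0
    simp [kappa1, v2, this]

lemma axp_iff (S : Finset (Fin 2)) : AXp kappa1 v2 S ↔ S = {0} := by
  constructor
  · rintro ⟨hw, hmin⟩
    have h0 : 0 ∈ S := (waxp_iff S).1 hw
    by_contra hne
    exact hmin {0} (Finset.ssubset_iff_of_subset (Finset.singleton_subset_iff.2 h0)
      |>.2 (by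
        obtain ⟨a, ha, hna⟩ := Finset.exists_of_ssubset
          ((Finset.singleton_subset_iff.2 h0).ssubset_of_ne (fun e => hne e.symm))
        exact ⟨a, ha, hna⟩)) ((waxp_iff {0}).2 (by simp))
  · rintro rfl
    refine ⟨(waxp_iff {0}).2 (by simp), fun T hT hw => ?_⟩
    have h0 : 0 ∈ T := (waxp_iff T).1 hw
    exact absurd (Finset.singleton_subset_iff.2 h0) (fun h => hT.2 h)

lemma axps_eq : AXps kappa1 v2 = {({0} : Finset (Fin 2))} := by
  ext S
  simp [AXps, axp_iff]

lemma nuG0 : nuG kappa1 v2 {0} = 1 := by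
  rw [nuG, if_pos]
  intro i _
  exact (waxp_iff _).2 (by simp)

lemma nuG1 : nuG kappa1 v2 {1} = 1 := by
  rw [nuG, if_pos]
  intro i hi
  refine (waxp_iff _).2 ?_
  have : i = 0 := by
    fin_cases i
    · rfl
    · simp at hi
  simp [this]

lemma nuGe : nuG kappa1 v2 ∅ = 0 := by
  rw [nuG, if_neg]
  intro h
  have := (waxp_iff _).1 (h 1 (by simp))
  simp at this

theorem stmt19 :
    nuG kappa1 v2 {0} = nuG kappa1 v2 {1} ∧
      tScH kappa1 v2 (nuG kappa1 v2) 0 = 1 ∧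
      tScH kappa1 v2 (nuG kappa1 v2) 1 = 0 ∧
      ¬ (tScH kappa1 v2 (nuG kappa1 v2) 0 = tScH kappa1 v2 (nuG kappa1 v2) 1) := by
  have h1 : tScH kappa1 v2 (nuG kappa1 v2) 0 = 1 := by
    rw [tScH, axps_eq]
    rw [Finset.filter_singleton]
    simp [nuG0, nuGe, Finset.erase_singleton]
  have h2 : tScH kappa1 v2 (nuG kappa1 v2) 1 = 0 := by
    rw [tScH, axps_eq]
    rw [Finset.filter_singleton]
    norm_num
  refine ⟨by rw [nuG0, nuG1], h1, h2, ?_⟩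
  rw [h1, h2]; norm_num
end
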